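/- Asymptotics of the main terms η_k (Lemma, eq. (3.9)). Fix an even integer n = 2q with q ≥ 2, an index k with 1 ≤ k ≤ q−1, and Φ ∈ C_0(0,1). Then sup_{x∈[0,1]} | ∫_{Γ_r} e^{iρ ε_k x} ( ∫_0^1 Φ(ξ) e^{iρξ} dξ ) dρ − i e^{ir ε_k x} I_r^+(Φ)(x) | → 0 as r → ∞. -/

import Mathlib

/-!
Swapping the two integrals turns the contour term into `∫₀¹ Φ(ξ) K(ξ) dξ` with the arc kernel
`K(ξ) = ∫_{Γ_r} e^{iρc} dρ`, `c = ε_k x + ξ`, which integrates to `(e^{iRc} - e^{irc}) / (ic)`,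
`R = r ε_1`. As `0 < arg ε_k` and `arg ε_k + 2π/n ≤ π`, `|e^{iρc}| ≤ 1` on `Γ_r`, so
`|K| ≤ 2πr/n`; this handles `ξ < 1/r`. For `ξ > 1/r`,
`K - i e^{irc}/(x+ξ) = e^{iRc}/(ic) + i e^{irc} (1/c - 1/(x+ξ))`, and `|c| ≥ ξ sin(arg ε_k)`
together with `t e^{-t} ≤ 1` bounds this by `C / (rξ²)` uniformly in `x`. The difference is thus
at most `(2π/n) r ∫₀^{1/r} |Φ| + C r⁻¹ ∫_{1/r}^1 |Φ(ξ)| ξ⁻² dξ`, and both terms tend to `0`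
because `Φ` is continuous with `Φ(0) = 0`.
-/

noncomputable section

open MeasureTheory Filter Topology

namespace Equi

/-- `ε_k = exp(2πik/n)`. -/
def eps (n : ℕ) (k : ℤ) : ℂ := Complex.exp (2 * Real.pi * Complex.I * k / n)

/-- Integral over the circular arc `Γ_r = {r e^{iφ} : 0 ≤ φ ≤ 2π/n}`. -/
def contour (n : ℕ) (r : ℝ) (F : ℂ → ℂ) : ℂ :=
  ∫ φ in (0:ℝ)..(2 * Real.pi / n),
    F ((r : ℂ) * Complex.exp (Complex.I * φ)) * (Complex.I * r * Complex.exp (Complex.I * φ))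

/-- The singular integral `I_r^+(f)(x) = ∫_{1/r}^1 (x+ξ)⁻¹ e^{irξ} f(ξ) dξ`. -/
def Ip (r : ℝ) (f : ℝ → ℂ) (x : ℝ) : ℂ :=
  ∫ ξ in (1/r)..1, ((x : ℂ) + (ξ : ℂ))⁻¹ * Complex.exp (Complex.I * r * ξ) * f ξ

open Set Complex
open scoped Real

lemma integral_one_div_sq {a b : ℝ} (ha : 0 < a) (hab : a ≤ b) :
    ∫ ξ in a..b, 1 / ξ ^ 2 = 1 / a - 1 / b := by
  have h0 : (0 : ℝ) ∉ uIcc a b := by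
    rw [uIcc_of_le hab]; exact fun h => absurd h.1 (not_le.2 ha)
  have := integral_zpow (n := -2) (Or.inr ⟨by norm_num, h0⟩)
  simp only [zpow_neg, one_div] at this ⊢
  norm_num at this
  rw [this]; ring

section SmallAtZero

variable {E : Type*} [NormedAddCommGroup E] {f : ℝ → E}

lemma exists_norm_le_of_continuousOn_Icc (hf : ContinuousOn f (Icc 0 1)) (hf0 : f 0 = 0)
    {ε : ℝ} (hε : 0 < ε) : ∃ δ ∈ Ioc (0 : ℝ) 1, ∀ ξ ∈ Icc 0 δ, ‖f ξ‖ ≤ ε := by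
  have hlim : Tendsto f (𝓝[Icc 0 1] 0) (𝓝 0) := hf0 ▸ hf 0 ⟨le_rfl, zero_le_one⟩
  obtain ⟨δ, hδ, hball⟩ := Metric.mem_nhdsWithin_iff.1 (hlim (Metric.closedBall_mem_nhds 0 hε))
  refine ⟨min (δ / 2) 1, ⟨by positivity, min_le_right _ _⟩, fun ξ hξ => ?_⟩
  have hξδ : ξ < δ := by linarith [hξ.2, min_le_left (δ / 2) 1]
  simpa using hball ⟨by simpa [abs_of_nonneg hξ.1] using hξδ,
    hξ.1, hξ.2.trans (min_le_right _ _)⟩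

lemma tendsto_mul_integral_norm_zero_inv (hf : ContinuousOn f (Icc 0 1)) (hf0 : f 0 = 0) :
    Tendsto (fun r : ℝ => r * ∫ ξ in 0..1 / r, ‖f ξ‖) atTop (𝓝 0) := by
  rw [Metric.tendsto_atTop]
  intro ε hε
  obtain ⟨δ, ⟨hδ, -⟩, hsmall⟩ := exists_norm_le_of_continuousOn_Icc hf hf0 (half_pos hε)
  refine ⟨1 / δ, fun r hr => ?_⟩
  have hr0 : 0 < r := lt_of_lt_of_le (by positivity) hr
  have hrδ : 1 / r ≤ δ := (one_div_le hr0 hδ).2 hr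
  have hbound : ‖∫ ξ in 0..1 / r, ‖f ξ‖‖ ≤ ε / 2 * |1 / r - 0| :=
    intervalIntegral.norm_integral_le_of_norm_le_const fun ξ hξ => by
      rw [uIoc_of_le (by positivity)] at hξ
      simpa using hsmall ξ ⟨hξ.1.le, hξ.2.trans hrδ⟩
  rw [dist_zero_right, norm_mul, Real.norm_of_nonneg hr0.le]
  calc r * ‖∫ ξ in 0..1 / r, ‖f ξ‖‖ ≤ r * (ε / 2 * |1 / r - 0|) := by gcongr
    _ = ε / 2 := by rw [sub_zero, abs_of_pos (by positivity)]; field_simp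
    _ < ε := half_lt_self hε

lemma integral_norm_div_sq_le {a δ ε M : ℝ} (hf : ContinuousOn f (Icc a 1)) (ha : 0 < a)
    (haδ : a ≤ δ) (hδ1 : δ ≤ 1) (hε : ∀ ξ ∈ Icc a δ, ‖f ξ‖ ≤ ε)
    (hM : ∀ ξ ∈ Icc δ 1, ‖f ξ‖ ≤ M) :
    ∫ ξ in a..1, ‖f ξ‖ / ξ ^ 2 ≤ ε / a + M / δ ^ 2 := by
  have hδ : 0 < δ := ha.trans_le haδ
  have hε0 : 0 ≤ ε := (norm_nonneg _).trans (hε a ⟨le_rfl, haδ⟩)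
  have hM0 : 0 ≤ M := (norm_nonneg _).trans (hM δ ⟨le_rfl, hδ1⟩)
  have hint : ∀ b c, a ≤ b → b ≤ c → c ≤ 1 →
      IntervalIntegrable (fun ξ => ‖f ξ‖ / ξ ^ 2) volume b c := fun b c hab hbc hc1 =>
    ContinuousOn.intervalIntegrable <| by
      rw [uIcc_of_le hbc]
      exact (hf.norm.mono (Icc_subset_Icc hab hc1)).div (continuousOn_pow 2)
        fun ξ hξ => by have := ha.trans_le (hab.trans hξ.1); positivity
  have hnear : ∫ ξ in a..δ, ‖f ξ‖ / ξ ^ 2 ≤ ε / a := by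
    calc ∫ ξ in a..δ, ‖f ξ‖ / ξ ^ 2 ≤ ∫ ξ in a..δ, ε * (1 / ξ ^ 2) := by
          refine intervalIntegral.integral_mono_on haδ (hint _ _ le_rfl haδ hδ1)
            (ContinuousOn.intervalIntegrable ?_) fun ξ hξ => ?_
          · rw [uIcc_of_le haδ]
            exact continuousOn_const.mul (continuousOn_const.div (continuousOn_pow 2)
              fun ξ hξ => by have := ha.trans_le hξ.1; positivity)
          · have := ha.trans_le hξ.1
            rw [mul_one_div]
            gcongr
            exact hε ξ hξ
      _ = ε * (1 / a - 1 / δ) := by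
          rw [intervalIntegral.integral_const_mul, integral_one_div_sq ha haδ]
      _ ≤ ε / a := by
          rw [← mul_one_div ε a]; gcongr; linarith [one_div_pos.2 hδ]
  have hfar : ∫ ξ in δ..1, ‖f ξ‖ / ξ ^ 2 ≤ M / δ ^ 2 := by
    calc ∫ ξ in δ..1, ‖f ξ‖ / ξ ^ 2 ≤ ∫ ξ in δ..1, M / δ ^ 2 :=
          intervalIntegral.integral_mono_on hδ1 (hint _ _ haδ hδ1 le_rfl) intervalIntegrable_const
            fun ξ hξ => by gcongr; exacts [hM ξ hξ, hξ.1]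
      _ = M / δ ^ 2 * (1 - δ) := by rw [intervalIntegral.integral_const, smul_eq_mul, mul_comm]
      _ ≤ M / δ ^ 2 := mul_le_of_le_one_right (by positivity) (by linarith)
  rw [← intervalIntegral.integral_add_adjacent_intervals (hint _ _ le_rfl haδ hδ1)
    (hint _ _ haδ hδ1 le_rfl)]
  exact add_le_add hnear hfar

lemma tendsto_inv_mul_integral_norm_div_sq (hf : ContinuousOn f (Icc 0 1)) (hf0 : f 0 = 0) :
    Tendsto (fun r : ℝ => r⁻¹ * ∫ ξ in 1 / r..1, ‖f ξ‖ / ξ ^ 2) atTop (𝓝 0) := by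
  obtain ⟨M, hM⟩ := isCompact_Icc.exists_bound_of_continuousOn hf
  rw [Metric.tendsto_nhds]
  intro ε hε
  obtain ⟨δ, ⟨hδ, hδ1⟩, hsmall⟩ := exists_norm_le_of_continuousOn_Icc hf hf0 (half_pos hε)
  have htail : Tendsto (fun r : ℝ => M / δ ^ 2 * r⁻¹) atTop (𝓝 0) := by
    simpa using tendsto_inv_atTop_zero.const_mul (M / δ ^ 2)
  filter_upwards [eventually_ge_atTop (1 / δ), eventually_gt_atTop 0,
    htail.eventually_lt_const (half_pos hε)] with r hrδ hr0 hMr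
  have ha : 0 < 1 / r := by positivity
  have haδ : 1 / r ≤ δ := (one_div_le hr0 hδ).2 hrδ
  have hbound := integral_norm_div_sq_le (hf.mono (Icc_subset_Icc ha.le le_rfl)) ha haδ hδ1
    (fun ξ hξ => hsmall ξ ⟨ha.le.trans hξ.1, hξ.2⟩)
    (fun ξ hξ => hM ξ ⟨hδ.le.trans hξ.1, hξ.2⟩)
  have hnonneg : 0 ≤ ∫ ξ in 1 / r..1, ‖f ξ‖ / ξ ^ 2 :=
    intervalIntegral.integral_nonneg (haδ.trans hδ1) fun ξ _ => by positivity
  rw [Real.dist_eq, sub_zero, abs_of_nonneg (by positivity)]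
  calc r⁻¹ * ∫ ξ in 1 / r..1, ‖f ξ‖ / ξ ^ 2 ≤ r⁻¹ * (ε / 2 / (1 / r) + M / δ ^ 2) := by gcongr
    _ = ε / 2 + M / δ ^ 2 * r⁻¹ := by field_simp
    _ < ε := by linarith

end SmallAtZero

lemma mul_exp_neg_le_one (t : ℝ) : t * Real.exp (-t) ≤ 1 :=
  (Real.mul_exp_neg_le_exp_neg_one t).trans (Real.exp_le_one_iff.2 (by norm_num))

lemma exp_neg_le_inv {t : ℝ} (ht : 0 < t) : Real.exp (-t) ≤ t⁻¹ := by
  rw [le_inv_comm₀ (Real.exp_pos _) ht, ← Real.exp_neg, neg_neg]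
  linarith [Real.add_one_le_exp t]

lemma norm_exp_I_mul (z : ℂ) : ‖exp (I * z)‖ = Real.exp (-z.im) := by
  rw [norm_exp]; simp

lemma im_exp_I_mul (t : ℝ) : (exp (I * t)).im = Real.sin t := by
  rw [mul_comm, exp_ofReal_mul_I_im]

lemma im_ofReal_mul_exp_mul (r φ θ x ξ : ℝ) :
    ((r : ℂ) * exp (I * φ) * (exp (I * θ) * x + ξ)).im
      = r * (x * Real.sin (φ + θ) + ξ * Real.sin φ) := by
  have h : (r : ℂ) * exp (I * φ) * (exp (I * θ) * x + ξ)
      = (r * x : ℝ) * exp (I * (φ + θ : ℝ)) + (r * ξ : ℝ) * exp (I * φ) := by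
    push_cast; rw [mul_add I, exp_add]; ring
  rw [h, add_im, im_ofReal_mul, im_ofReal_mul, im_exp_I_mul, im_exp_I_mul]
  ring

lemma im_exp_I_mul_mul_add (θ x ξ : ℝ) : (exp (I * θ) * x + ξ).im = Real.sin θ * x := by
  rw [add_im, ofReal_im, add_zero, mul_comm, im_ofReal_mul, im_exp_I_mul, mul_comm]

lemma abs_mul_sin_le_norm (θ x ξ : ℝ) : |ξ * Real.sin θ| ≤ ‖exp (I * θ) * x + ξ‖ := by
  have hre : (exp (I * θ) * x + ξ).re = Real.cos θ * x + ξ := by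
    rw [mul_comm I, exp_mul_I]; simp [← ofReal_cos, ← ofReal_sin]
  have him := im_exp_I_mul_mul_add θ x ξ
  rw [← abs_norm, ← sq_le_sq, Complex.sq_norm, normSq_apply, hre, him]
  have key : (Real.cos θ * x + ξ) * (Real.cos θ * x + ξ) + Real.sin θ * x * (Real.sin θ * x)
      = (x + ξ * Real.cos θ) ^ 2 + (ξ * Real.sin θ) ^ 2 := by
    linear_combination (x ^ 2 - ξ ^ 2) * Real.sin_sq_add_cos_sq θ
  rw [key]
  exact le_add_of_nonneg_left (sq_nonneg _)

lemma exp_I_mul_mul_add_ne_zero {θ x ξ : ℝ} (hθ : Real.sin θ ≠ 0) (hξ : ξ ≠ 0) :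
    exp (I * θ) * x + ξ ≠ 0 := fun h => by
  have := abs_mul_sin_le_norm θ x ξ
  rw [h, norm_zero, abs_nonpos_iff, mul_eq_zero] at this
  exact this.elim hξ hθ

lemma norm_contour_le {n : ℕ} {r M : ℝ} {F : ℂ → ℂ} (hr : 0 ≤ r)
    (hF : ∀ φ ∈ Icc 0 (2 * π / n), ‖F (r * exp (I * φ))‖ ≤ M) :
    ‖contour n r F‖ ≤ M * r * (2 * π / n) := by
  have hT : 0 ≤ 2 * π / n := by positivity
  have h := intervalIntegral.norm_integral_le_of_norm_le_const (a := 0) (b := 2 * π / n)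
    (C := M * r) (f := fun φ : ℝ => F (r * exp (I * φ)) * (I * r * exp (I * φ)))
    fun φ hφ => by
      rw [uIoc_of_le hT] at hφ
      have hJ : ‖I * r * exp (I * φ)‖ = r := by
        rw [norm_mul, norm_mul, norm_I, norm_exp_I_mul_ofReal, Complex.norm_real,
          Real.norm_of_nonneg hr, one_mul, mul_one]
      rw [norm_mul, hJ]
      exact mul_le_mul_of_nonneg_right (hF φ (Ioc_subset_Icc_self hφ)) hr
  rwa [sub_zero, abs_of_nonneg hT] at h

lemma contour_eq_sub_of_hasDerivAt {n : ℕ} {r : ℝ} {F G : ℂ → ℂ}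
    (hG : ∀ z, HasDerivAt G (F z) z) (hF : Continuous F) :
    contour n r F = G (r * exp (I * (2 * π / n : ℝ))) - G r := by
  have hderiv : ∀ φ : ℝ, HasDerivAt (fun φ : ℝ => G (r * exp (I * φ)))
      (F (r * exp (I * φ)) * (I * r * exp (I * φ))) φ := by
    intro φ
    have harc : HasDerivAt (fun w : ℂ => (r : ℂ) * exp (I * w)) (I * r * exp (I * φ)) φ :=
      (((hasDerivAt_id (φ : ℂ)).const_mul I).cexp.const_mul (r : ℂ)).congr_deriv
        (by simp only [id, mul_one]; ring)
    exact ((hG _).comp (φ : ℂ) harc).comp_ofReal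
  rw [contour, intervalIntegral.integral_eq_sub_of_hasDerivAt (fun φ _ => hderiv φ)
    (by apply Continuous.intervalIntegrable; fun_prop)]
  simp

lemma contour_integral_comm {n : ℕ} {r : ℝ} {f : ℝ → ℂ} {g : ℂ → ℝ → ℂ}
    (hf : ContinuousOn f (Icc 0 1)) (hg : Continuous (Function.uncurry g)) :
    contour n r (fun ρ => ∫ ξ in (0 : ℝ)..1, f ξ * g ρ ξ)
      = ∫ ξ in (0 : ℝ)..1, f ξ * contour n r (fun ρ => g ρ ξ) := by
  have hT : 0 ≤ 2 * π / n := by positivity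
  simp only [contour, ← intervalIntegral.integral_mul_const, ← intervalIntegral.integral_const_mul,
    mul_assoc]
  apply intervalIntegral_intervalIntegral_swap
  rw [uIoc_of_le hT, uIoc_of_le zero_le_one]
  refine (ContinuousOn.integrableOn_compact (isCompact_Icc.prod isCompact_Icc) ?_).mono_set
    (prod_mono Ioc_subset_Icc_self Ioc_subset_Icc_self)
  refine (hf.comp continuousOn_snd fun p hp => hp.2).mul (Continuous.continuousOn ?_)
  exact (hg.comp (f := fun p : ℝ × ℝ => ((r : ℂ) * exp (I * p.1), p.2)) (by fun_prop)).mul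
    (by fun_prop)

section ArcKernel

variable {n : ℕ} {r θ x ξ : ℝ}

lemma contour_exp_mul {c : ℂ} (hc : c ≠ 0) :
    contour n r (fun ρ => exp (I * ρ * c))
      = (exp (I * (r * exp (I * (2 * π / n : ℝ))) * c) - exp (I * r * c)) / (I * c) := by
  have hIc : I * c ≠ 0 := mul_ne_zero I_ne_zero hc
  rw [contour_eq_sub_of_hasDerivAt (G := fun z => exp (I * z * c) / (I * c))
    (fun z => ((((hasDerivAt_id z).const_mul I).mul_const c).cexp.div_const (I * c)).congr_deriv
      (by simp only [id, mul_one]; exact mul_div_cancel_right₀ _ hIc)) (by fun_prop), sub_div]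

lemma norm_contour_exp_mul_le (hθ : 0 ≤ θ) (hθT : θ + 2 * π / n ≤ π) (hr : 0 ≤ r)
    (hx : 0 ≤ x) (hξ : 0 ≤ ξ) :
    ‖contour n r (fun ρ => exp (I * ρ * (exp (I * θ) * x + ξ)))‖ ≤ r * (2 * π / n) := by
  have h := norm_contour_le (M := 1) (F := fun ρ => exp (I * ρ * (exp (I * θ) * x + ξ))) hr
    fun φ hφ => by
      have hφθ : φ + θ ≤ π := by rw [add_comm]; exact (add_le_add_right hφ.2 θ).trans hθT
      have hφπ : φ ≤ π := (le_add_of_nonneg_right hθ).trans hφθ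
      have hsin : 0 ≤ Real.sin (φ + θ) :=
        Real.sin_nonneg_of_nonneg_of_le_pi (add_nonneg hφ.1 hθ) hφθ
      have hsin' : 0 ≤ Real.sin φ := Real.sin_nonneg_of_nonneg_of_le_pi hφ.1 hφπ
      rw [mul_assoc, norm_exp_I_mul, im_ofReal_mul_exp_mul, Real.exp_le_one_iff, neg_nonpos]
      positivity
  rwa [one_mul] at h

lemma norm_exp_arc_end_div_le (hn : 0 < n) (hθ : 0 < θ) (hθT : θ + 2 * π / n ≤ π) (hr : 0 < r)
    (hx : 0 ≤ x) (hξ : 0 < ξ) :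
    ‖exp (I * (r * exp (I * (2 * π / n : ℝ))) * (exp (I * θ) * x + ξ))
        / (I * (exp (I * θ) * x + ξ))‖
      ≤ 1 / (Real.sin θ * Real.sin (2 * π / n)) / (r * ξ ^ 2) := by
  set T := 2 * π / n
  have hT : 0 < T := by positivity
  have hsθ : 0 < Real.sin θ := Real.sin_pos_of_pos_of_lt_pi hθ (by linarith)
  have hsT : 0 < Real.sin T := Real.sin_pos_of_pos_of_lt_pi hT (by linarith)
  have hsTθ : 0 ≤ Real.sin (T + θ) := Real.sin_nonneg_of_nonneg_of_le_pi (by linarith)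
    (by linarith)
  have hc : ξ * Real.sin θ ≤ ‖exp (I * θ) * x + ξ‖ :=
    (le_abs_self _).trans (abs_mul_sin_le_norm θ x ξ)
  have hdecay : Real.exp (-(r * (x * Real.sin (T + θ) + ξ * Real.sin T)))
      ≤ (r * ξ * Real.sin T)⁻¹ :=
    calc _ ≤ Real.exp (-(r * ξ * Real.sin T)) := by
          refine Real.exp_le_exp.2 ?_; nlinarith [mul_nonneg (mul_nonneg hr.le hx) hsTθ]
      _ ≤ (r * ξ * Real.sin T)⁻¹ := exp_neg_le_inv (by positivity)
  rw [norm_div, norm_mul, norm_I, one_mul, mul_assoc, norm_exp_I_mul, im_ofReal_mul_exp_mul]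
  calc Real.exp (-(r * (x * Real.sin (T + θ) + ξ * Real.sin T))) / ‖exp (I * θ) * x + ξ‖
      ≤ (r * ξ * Real.sin T)⁻¹ / (ξ * Real.sin θ) :=
        div_le_div₀ (by positivity) hdecay (by positivity) hc
    _ = 1 / (Real.sin θ * Real.sin T) / (r * ξ ^ 2) := by field_simp

lemma norm_exp_mul_inv_sub_inv_le (hθ : 0 < θ) (hθπ : θ < π) (hr : 0 < r) (hx : 0 ≤ x)
    (hξ : 0 < ξ) :
    ‖I * exp (I * r * (exp (I * θ) * x + ξ)) * ((exp (I * θ) * x + ξ)⁻¹ - ((x : ℂ) + ξ)⁻¹)‖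
      ≤ 2 / Real.sin θ ^ 2 / (r * ξ ^ 2) := by
  set c := exp (I * θ) * x + ξ
  have hsθ : 0 < Real.sin θ := Real.sin_pos_of_pos_of_lt_pi hθ hθπ
  have hc : ξ * Real.sin θ ≤ ‖c‖ := (le_abs_self _).trans (abs_mul_sin_le_norm θ x ξ)
  have hc0 : c ≠ 0 := exp_I_mul_mul_add_ne_zero hsθ.ne' hξ.ne'
  have hxξ : ‖(x : ℂ) + ξ‖ = x + ξ := by
    rw [← ofReal_add, Complex.norm_real, Real.norm_of_nonneg (by positivity)]
  have hxξ0 : (x : ℂ) + ξ ≠ 0 := norm_pos_iff.1 (by rw [hxξ]; positivity)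
  have hnum : ‖(x : ℂ) + ξ - c‖ ≤ 2 * x := by
    have h1 : (x : ℂ) + ξ - c = (1 - exp (I * θ)) * x := by ring
    have h2 : ‖1 - exp (I * θ)‖ ≤ 2 := by
      refine (norm_sub_le _ _).trans ?_
      rw [norm_one, norm_exp_I_mul_ofReal]; norm_num
    rw [h1, norm_mul, Complex.norm_real, Real.norm_of_nonneg hx]
    gcongr
  have hdecay : Real.exp (-(r * (Real.sin θ * x))) * x ≤ (r * Real.sin θ)⁻¹ := by
    rw [← one_div, le_div_iff₀ (by positivity)]
    calc _ = r * Real.sin θ * x * Real.exp (-(r * Real.sin θ * x)) := by ring_nf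
      _ ≤ 1 := mul_exp_neg_le_one _
  rw [inv_sub_inv hc0 hxξ0, norm_mul, norm_mul, norm_I, one_mul, mul_assoc, norm_exp_I_mul,
    im_ofReal_mul, im_exp_I_mul_mul_add, norm_div, norm_mul, hxξ]
  calc Real.exp (-(r * (Real.sin θ * x))) * (‖(x : ℂ) + ξ - c‖ / (‖c‖ * (x + ξ)))
      ≤ Real.exp (-(r * (Real.sin θ * x))) * (2 * x / (ξ * Real.sin θ * ξ)) := by
        gcongr; linarith
    _ = 2 / (Real.sin θ * ξ ^ 2) * (Real.exp (-(r * (Real.sin θ * x))) * x) := by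
        field_simp
    _ ≤ 2 / (Real.sin θ * ξ ^ 2) * (r * Real.sin θ)⁻¹ := by gcongr
    _ = 2 / Real.sin θ ^ 2 / (r * ξ ^ 2) := by field_simp

lemma norm_contour_exp_mul_sub_le (hn : 0 < n) (hθ : 0 < θ) (hθT : θ + 2 * π / n ≤ π)
    (hr : 0 < r) (hx : 0 ≤ x) (hξ : 0 < ξ) :
    ‖contour n r (fun ρ => exp (I * ρ * (exp (I * θ) * x + ξ)))
        - I * exp (I * r * (exp (I * θ) * x + ξ)) / (x + ξ)‖
      ≤ (1 / (Real.sin θ * Real.sin (2 * π / n)) + 2 / Real.sin θ ^ 2) / (r * ξ ^ 2) := by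
  have hθπ : θ < π := by linarith [show 0 < 2 * π / (n : ℝ) by positivity]
  have hc0 := exp_I_mul_mul_add_ne_zero (x := x) (Real.sin_pos_of_pos_of_lt_pi hθ hθπ).ne' hξ.ne'
  have hxξ0 : (x : ℂ) + ξ ≠ 0 := by exact_mod_cast (show x + ξ ≠ 0 by positivity)
  rw [contour_exp_mul hc0, add_div]
  refine (norm_add_le_of_le (norm_exp_arc_end_div_le hn hθ hθT hr hx hξ)
    (norm_exp_mul_inv_sub_inv_le hθ hθπ hr hx hξ)).trans_eq' (congrArg _ ?_)
  field_simp
  ring_nf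
  rw [I_sq]
  ring

end ArcKernel

lemma norm_integral_mul_le {f g : ℝ → ℂ} {h : ℝ → ℝ} {a b : ℝ} (hab : a ≤ b)
    (hf : ContinuousOn f (Icc a b)) (hg : ContinuousOn g (Icc a b))
    (hh : ContinuousOn h (Icc a b)) (hgh : ∀ ξ ∈ Icc a b, ‖g ξ‖ ≤ h ξ) :
    ‖∫ ξ in a..b, f ξ * g ξ‖ ≤ ∫ ξ in a..b, ‖f ξ‖ * h ξ := by
  refine (intervalIntegral.norm_integral_le_integral_norm hab).trans
    (intervalIntegral.integral_mono_on hab ?_ ?_ fun ξ hξ => ?_)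
  · exact ContinuousOn.intervalIntegrable ((uIcc_of_le hab).symm ▸ (hf.mul hg).norm)
  · exact ContinuousOn.intervalIntegrable ((uIcc_of_le hab).symm ▸ hf.norm.mul hh)
  · rw [norm_mul]; exact mul_le_mul_of_nonneg_left (hgh ξ hξ) (norm_nonneg _)

lemma norm_integral_sub_integral_le {f K P : ℝ → ℂ} {a A B : ℝ} (ha : 0 < a) (ha1 : a ≤ 1)
    (hf : ContinuousOn f (Icc 0 1)) (hK : ContinuousOn K (Icc 0 1))
    (hP : ContinuousOn P (Icc a 1)) (hKA : ∀ ξ ∈ Icc 0 a, ‖K ξ‖ ≤ A)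
    (hKP : ∀ ξ ∈ Icc a 1, ‖K ξ - P ξ‖ ≤ B / ξ ^ 2) :
    ‖(∫ ξ in (0 : ℝ)..1, f ξ * K ξ) - ∫ ξ in a..1, f ξ * P ξ‖
      ≤ A * (∫ ξ in (0 : ℝ)..a, ‖f ξ‖) + B * ∫ ξ in a..1, ‖f ξ‖ / ξ ^ 2 := by
  have hsub₁ : Icc 0 a ⊆ Icc 0 1 := Icc_subset_Icc_right ha1
  have hsub₂ : Icc a 1 ⊆ Icc 0 1 := Icc_subset_Icc_left ha.le
  have hint : ∀ {g : ℝ → ℂ} {s t : ℝ}, s ≤ t → ContinuousOn g (Icc s t) →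
      IntervalIntegrable g volume s t := fun hst hg =>
    ContinuousOn.intervalIntegrable ((uIcc_of_le hst).symm ▸ hg)
  have hfK : ContinuousOn (fun ξ => f ξ * K ξ) (Icc 0 1) := hf.mul hK
  have hfP : ContinuousOn (fun ξ => f ξ * P ξ) (Icc a 1) := (hf.mono hsub₂).mul hP
  have hsplit : (∫ ξ in (0 : ℝ)..1, f ξ * K ξ) - ∫ ξ in a..1, f ξ * P ξ
      = (∫ ξ in (0 : ℝ)..a, f ξ * K ξ) + ∫ ξ in a..1, f ξ * (K ξ - P ξ) := by
    rw [← intervalIntegral.integral_add_adjacent_intervals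
      (hint ha.le (hfK.mono hsub₁)) (hint ha1 (hfK.mono hsub₂)), add_sub_assoc,
      ← intervalIntegral.integral_sub (hint ha1 (hfK.mono hsub₂)) (hint ha1 hfP)]
    simp only [mul_sub]
  have hnear := norm_integral_mul_le ha.le (hf.mono hsub₁) (hK.mono hsub₁) continuousOn_const hKA
  have hB : ContinuousOn (fun ξ : ℝ => B / ξ ^ 2) (Icc a 1) :=
    continuousOn_const.div (continuousOn_pow 2) fun ξ hξ => by
      have := ha.trans_le hξ.1; positivity
  have hfar := norm_integral_mul_le (g := fun ξ => K ξ - P ξ) ha1 (hf.mono hsub₂)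
    ((hK.mono hsub₂).sub hP) hB hKP
  rw [hsplit]
  refine (norm_add_le _ _).trans (add_le_add (hnear.trans_eq ?_) (hfar.trans_eq ?_))
  · rw [intervalIntegral.integral_mul_const, mul_comm]
  · rw [← intervalIntegral.integral_const_mul]
    congr 1; ext ξ; ring

lemma norm_contour_sub_Ip_le {n : ℕ} {r θ x : ℝ} {Φ : ℝ → ℂ} (hn : 0 < n) (hθ : 0 < θ)
    (hθT : θ + 2 * π / n ≤ π) (hΦ : ContinuousOn Φ (Icc 0 1)) (hr : 1 ≤ r) (hx : 0 ≤ x) :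
    ‖(contour n r fun ρ =>
          exp (I * ρ * exp (I * θ) * x) * ∫ ξ in (0 : ℝ)..1, Φ ξ * exp (I * ρ * ξ))
        - I * exp (I * r * exp (I * θ) * x) * Ip r Φ x‖
      ≤ 2 * π / n * (r * ∫ ξ in (0 : ℝ)..1 / r, ‖Φ ξ‖)
        + (1 / (Real.sin θ * Real.sin (2 * π / n)) + 2 / Real.sin θ ^ 2)
          * (r⁻¹ * ∫ ξ in 1 / r..1, ‖Φ ξ‖ / ξ ^ 2) := by
  have hr0 : 0 < r := one_pos.trans_le hr
  have hcontour : (contour n r fun ρ =>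
        exp (I * ρ * exp (I * θ) * x) * ∫ ξ in (0 : ℝ)..1, Φ ξ * exp (I * ρ * ξ))
      = ∫ ξ in (0 : ℝ)..1, Φ ξ * contour n r (fun ρ => exp (I * ρ * (exp (I * θ) * x + ξ))) := by
    rw [← contour_integral_comm hΦ (g := fun ρ ξ => exp (I * ρ * (exp (I * θ) * x + ξ)))
      (by fun_prop)]
    congr 1; ext ρ
    rw [← intervalIntegral.integral_const_mul]
    congr 1; ext ξ
    rw [mul_add, exp_add]; ring_nf
  have hIp : I * exp (I * r * exp (I * θ) * x) * Ip r Φ x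
      = ∫ ξ in 1 / r..1, Φ ξ * (I * exp (I * r * (exp (I * θ) * x + ξ)) / (x + ξ)) := by
    rw [Ip, ← intervalIntegral.integral_const_mul]
    congr 1; ext ξ
    rw [mul_add, exp_add, div_eq_mul_inv]; ring_nf
  rw [hcontour, hIp]
  refine (norm_integral_sub_integral_le (A := r * (2 * π / n))
    (B := (1 / (Real.sin θ * Real.sin (2 * π / n)) + 2 / Real.sin θ ^ 2) / r) (by positivity)
    (div_le_one_of_le₀ hr hr0.le) hΦ ?_ ?_ ?_ ?_).trans_eq (by ring)
  · exact Continuous.continuousOn (by unfold contour; fun_prop)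
  · refine ContinuousOn.div (by fun_prop) (by fun_prop) fun ξ hξ => ?_
    have := (one_div_pos.2 hr0).trans_le hξ.1
    exact_mod_cast (show x + ξ ≠ 0 by positivity)
  · exact fun ξ hξ => norm_contour_exp_mul_le hθ.le hθT hr0.le hx hξ.1
  · intro ξ hξ
    rw [div_div]
    exact norm_contour_exp_mul_sub_le hn hθ hθT hr0 hx ((one_div_pos.2 hr0).trans_le hξ.1)

theorem main_term_asymptotics_general
    (n q : ℕ) (hn : n = 2 * q)
    (k : ℕ) (hk₁ : 1 ≤ k) (hk₂ : k ≤ q - 1)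
    (Φ : ℝ → ℂ) (hΦcont : ContinuousOn Φ (Set.Icc 0 1))
    (hΦ0 : Φ 0 = 0) :
    Tendsto (fun r : ℝ => ⨆ x : Set.Icc (0:ℝ) 1,
        ‖(contour n r fun ρ =>
            Complex.exp (Complex.I * ρ * eps n k * (x.val : ℂ)) *
              ∫ ξ in (0:ℝ)..1, Φ ξ * Complex.exp (Complex.I * ρ * ξ)) -
          Complex.I * Complex.exp (Complex.I * r * eps n k * (x.val : ℂ)) * Ip r Φ x.val‖)
      atTop (nhds 0) := by
  have hn0 : 0 < n := by omega
  set θ : ℝ := 2 * π * k / n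
  have hk : (0 : ℝ) < k := by exact_mod_cast hk₁
  have hθ : 0 < θ := by positivity
  have hθT : θ + 2 * π / n ≤ π := by
    have hkq : (k : ℝ) + 1 ≤ q := by exact_mod_cast (by omega : k + 1 ≤ q)
    rw [← add_div, div_le_iff₀ (by positivity), hn]
    push_cast
    nlinarith [Real.pi_pos]
  have heps : eps n k = exp (I * θ) := by
    simp only [eps, θ]; push_cast; ring_nf
  have hlim := ((tendsto_mul_integral_norm_zero_inv hΦcont hΦ0).const_mul (2 * π / n)).add
    ((tendsto_inv_mul_integral_norm_div_sq hΦcont hΦ0).const_mul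
      (1 / (Real.sin θ * Real.sin (2 * π / n)) + 2 / Real.sin θ ^ 2))
  rw [mul_zero, mul_zero, add_zero] at hlim
  refine squeeze_zero' (Eventually.of_forall fun r => Real.iSup_nonneg fun _ => norm_nonneg _)
    ?_ hlim
  filter_upwards [eventually_ge_atTop 1] with r hr
  refine ciSup_le fun x => ?_
  rw [heps]
  exact norm_contour_sub_Ip_le hn0 hθ hθT hΦcont hr x.2.1

/-- **Asymptotics of the main terms `η_k` (eq. (3.9)).** For `1 ≤ k ≤ q−1` and
`Φ ∈ C₀(0,1)`:
`sup_{x∈[0,1]} |∫_{Γ_r} e^{iρε_k x}(∫₀¹ Φ(ξ)e^{iρξ} dξ) dρ − i e^{irε_k x} I_r^+(Φ)(x)| → 0`. -/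
theorem main_term_asymptotics
    (n q : ℕ) (hn : n = 2 * q) (hq : 2 ≤ q)
    (k : ℕ) (hk₁ : 1 ≤ k) (hk₂ : k ≤ q - 1)
    (Φ : ℝ → ℂ) (hΦcont : ContinuousOn Φ (Set.Icc 0 1))
    (hΦ0 : Φ 0 = 0) (hΦ1 : Φ 1 = 0) :
    Tendsto (fun r : ℝ => ⨆ x : Set.Icc (0:ℝ) 1,
        ‖(contour n r fun ρ =>
            Complex.exp (Complex.I * ρ * eps n k * (x.val : ℂ)) *
              ∫ ξ in (0:ℝ)..1, Φ ξ * Complex.exp (Complex.I * ρ * ξ)) -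
          Complex.I * Complex.exp (Complex.I * r * eps n k * (x.val : ℂ)) * Ip r Φ x.val‖)
      atTop (nhds 0) :=
  main_term_asymptotics_general n q hn k hk₁ hk₂ Φ hΦcont hΦ0

end Equi
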